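/- Let (E,C) be an adaptable separated graph and let p ∈ I_free be a non-minimal free component with vertex v^p. Let G_p'' be the abelian group with generators x_w, for vertices w ∈ E⁰ with [w] < p, and relations (i) x_w = Σ_{e∈s⁻¹(w)} x_{r(e)} for every w with [w] ∈ I_reg and [w] < p, and (ii) Σ_{j=1}^{g(q,i)} x_{r(β(q,i,j))} = 0 for every q ∈ I_free with q ≤ p and every i = 1,…,k(q). Let G_p' := {a_{v^p} + α : α ∈ M(E,C), a_{v^p} + α ≤ a_{v^p}} with the operation (a_{v^p}+α) ∘ (a_{v^p}+β) := a_{v^p} + (α+β). Then G_p' is an abelian group, and the assignment x_w ↦ a_{v^p} + a_w defines a group isomorphism G_p'' ≅ G_p'. -/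

import Mathlib

/-- A (finitely) separated graph `(E,C)`: a directed graph together with,
for each vertex `v`, a partition `C v` of `s⁻¹(v)` into pairwise disjoint
nonempty finite subsets. -/
structure SepGraph where
  V : Type
  Ed : Type
  s : Ed → V
  r : Ed → V
  C : V → Set (Finset Ed)
  c_src : ∀ v : V, ∀ X ∈ C v, ∀ e ∈ X, s e = v
  c_nonempty : ∀ v : V, ∀ X ∈ C v, X.Nonempty
  c_disjoint : ∀ v : V, ∀ X ∈ C v, ∀ Y ∈ C v, X ≠ Y → Disjoint X Y
  c_cover : ∀ e : Ed, ∃ X ∈ C (s e), e ∈ X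

namespace SepGraph

variable (G : SepGraph)

/-- There is an edge from `v` to `w`. -/
def Edge (v w : G.V) : Prop := ∃ e : G.Ed, G.s e = v ∧ G.r e = w

/-- There is a directed path from `v` to `w`. -/
def Reach : G.V → G.V → Prop := Relation.ReflTransGen G.Edge

/-- Mutual reachability: `v` and `w` lie in the same component, i.e. `[v] = [w]`. -/
def VEquiv (v w : G.V) : Prop := G.Reach v w ∧ G.Reach w v

/-- `[v] ≤ [w]` in the antisymmetrization poset `I` of `E⁰`. -/
def VLe (v w : G.V) : Prop := G.Reach w v

/-- `[v] < [w]` in the antisymmetrization poset `I` of `E⁰`. -/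
def VLt (v w : G.V) : Prop := G.Reach w v ∧ ¬ G.Reach v w

/-- The free commutative monoid `F` on the vertex set `E⁰`. -/
abbrev FreeM := G.V →₀ ℕ

/-- The basis element of `F` corresponding to a vertex. -/
noncomputable def vert (v : G.V) : G.FreeM := Finsupp.single v 1

/-- `r(X) = Σ_{e ∈ X} r(e)` as an element of `F`. -/
noncomputable def rX (X : Finset G.Ed) : G.FreeM := ∑ e ∈ X, Finsupp.single (G.r e) 1

/-- The defining relations of `M(E,C)`: `a_v = Σ_{e ∈ X} a_{r(e)}` for `X ∈ C_v`. -/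
def Rel : G.FreeM → G.FreeM → Prop := fun a b =>
  ∃ v : G.V, ∃ X ∈ G.C v, a = G.vert v ∧ b = G.rX X

/-- The congruence on `F` generated by the defining relations. -/
noncomputable def mCon : AddCon G.FreeM := addConGen G.Rel

/-- The monoid `M(E,C)` of the separated graph `(E,C)`. -/
def M := G.mCon.Quotient

noncomputable instance : AddCommMonoid G.M := inferInstanceAs (AddCommMonoid G.mCon.Quotient)

/-- The generator `a_v` of `M(E,C)`. -/
noncomputable def gen (v : G.V) : G.M := G.mCon.mk' (G.vert v)

end SepGraph

/-- The data witnessing that a separated graph is *adaptable*: the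
antisymmetrization `I` of `E⁰` is finite, it is partitioned into free and
regular elements (with free components reduced to a single vertex `v^p`),
and the conditions of Definition 1.6 of the paper hold.  Here, for
`p ∈ I_reg`, the subgraph `E_p` is the restriction of `E` to the class `p`. -/
structure SepGraph.AdaptableStructure (G : SepGraph) where
  /-- the partition `I = I_free ⊔ I_reg` (a vertex is free if its class is free) -/
  free : G.V → Prop
  /-- `I` is a finite poset -/
  finite_components : Finite (Quot G.VEquiv)
  free_respects : ∀ v w : G.V, G.VEquiv v w → (free v ↔ free w)
  /-- a free component consists of a single vertex `E_p⁰ = {v^p}` -/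
  free_singleton : ∀ v : G.V, free v → ∀ w : G.V, G.VEquiv w v → w = v
  /-- for free `p`, `s⁻¹(v^p) = ∅` iff `p` is minimal in `I` -/
  free_minimal : ∀ v : G.V, free v →
    ((¬ ∃ e : G.Ed, G.s e = v) ↔ ∀ w : G.V, G.Reach v w → G.VEquiv v w)
  /-- for free non-minimal `p`, `C_{v^p} = {X₁,…,X_{k(p)}}` is a finite family -/
  free_C_finite : ∀ v : G.V, free v → (G.C v).Finite
  /-- each `X_i ∈ C_{v^p}` contains exactly one loop `α(p,i)` at `v^p` -/
  free_loop : ∀ v : G.V, free v → ∀ X ∈ G.C v, ∃! e : G.Ed, e ∈ X ∧ G.r e = v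
  /-- the remaining edges `β(p,i,t)` of `X_i` end in strictly smaller components -/
  free_targets : ∀ v : G.V, free v → ∀ X ∈ G.C v, ∀ e ∈ X, G.r e = v ∨ G.VLt (G.r e) v
  /-- `g(p,i) ≥ 1`: there is at least one connector `β(p,i,1)` in each `X_i` -/
  free_beta : ∀ v : G.V, free v → ∀ X ∈ G.C v, ∃ e ∈ X, G.r e ≠ v
  /-- for regular `p` and `w ∈ E_p⁰`, `|C_w| = 1` -/
  reg_unique_C : ∀ w : G.V, ¬ free w → ∃! X : Finset G.Ed, X ∈ G.C w
  /-- for regular `p` and `w ∈ E_p⁰`, `|s_{E_p}⁻¹(w)| ≥ 2` -/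
  reg_two_edges : ∀ w : G.V, ¬ free w → ∃ e₁ e₂ : G.Ed, e₁ ≠ e₂ ∧ G.s e₁ = w ∧ G.s e₂ = w ∧
    G.VEquiv (G.r e₁) w ∧ G.VEquiv (G.r e₂) w
  /-- every edge leaving `w ∈ E_p⁰` stays in `E_p` or goes to some `E_q⁰` with `q < p` -/
  reg_targets : ∀ w : G.V, ¬ free w → ∀ e : G.Ed, G.s e = w →
    G.VEquiv (G.r e) w ∨ G.VLt (G.r e) w

namespace SepGraph

/-- In an adaptable separated graph, a regular vertex emits finitely many edges
(row-finiteness); this allows forming the sum `Σ_{e ∈ s⁻¹(w)}`. -/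
lemma pre_finite (G : SepGraph) (A : G.AdaptableStructure) {w : G.V} (hw : ¬ A.free w) :
    {e : G.Ed | G.s e = w}.Finite := by
  obtain ⟨X, hX, huniq⟩ := A.reg_unique_C w hw
  apply Set.Finite.subset X.finite_toSet
  intro e he
  rw [Set.mem_setOf_eq] at he
  obtain ⟨Y, hY, heY⟩ := G.c_cover e
  rw [he] at hY
  rw [huniq Y hY] at heY
  exact heY

end SepGraph

/-- The relations defining the group `G_p''` for a free prime `p = [v^p]`
(Definition 3.5(1)): generators `x_w` for `[w] < p`; relations
`x_w = Σ_{e ∈ s⁻¹(w)} x_{r(e)}` for regular `[w] < p`, and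
`Σ_{j=1}^{g(q,i)} x_{r(β(q,i,j))} = 0` for free `q ≤ p` and `i = 1,…,k(q)`
(`Y` below is the set of non-loop edges `β(q,i,1),…,β(q,i,g(q,i))` of `X_i ∈ C_{v^q}`). -/
def rels14 (G : SepGraph) (A : G.AdaptableStructure) (v : G.V) :
    Set ({w : G.V // G.VLt w v} →₀ ℤ) :=
  {f | ∃ (w : G.V) (hwv : G.VLt w v) (hw : ¬ A.free w)
        (hwf : ∀ e : G.Ed, G.s e = w → G.VLt (G.r e) v),
      f = Finsupp.single ⟨w, hwv⟩ 1 -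
        ∑ e ∈ (G.pre_finite A hw).toFinset.attach,
          Finsupp.single (⟨G.r e.1, hwf e.1 ((G.pre_finite A hw).mem_toFinset.mp e.2)⟩ :
            {w : G.V // G.VLt w v}) 1}
  ∪ {f | ∃ (u : G.V) (_ : A.free u) (_ : G.Reach v u) (X : Finset G.Ed) (_ : X ∈ G.C u)
        (Y : Finset G.Ed) (_ : Y ⊆ X) (_ : ∀ e ∈ X, (e ∈ Y ↔ G.r e ≠ u))
        (hwf : ∀ e ∈ Y, G.VLt (G.r e) v),
      f = ∑ e ∈ Y.attach,
        Finsupp.single (⟨G.r e.1, hwf e.1 e.2⟩ : {w : G.V // G.VLt w v}) 1}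

/-- The group `G_p''` for a free prime `p = [v^p]`: the abelian group with generators
`x_w` (`[w] < p`) and the relations `rels14`. -/
abbrev Gpp14 (G : SepGraph) (A : G.AdaptableStructure) (v : G.V) : Type :=
  ({w : G.V // G.VLt w v} →₀ ℤ) ⧸ AddSubgroup.closure (rels14 G A v)

/-- The set `G_p' = {a_{v^p} + α : α ∈ M(E,C), a_{v^p} + α ≤ a_{v^p}}`. -/
def Gp' (G : SepGraph) (v : G.V) : Type :=
  {x : G.M // (∃ α : G.M, x = G.gen v + α) ∧ (∃ z : G.M, x + z = G.gen v)}

/-!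
Write `g = a_{v^p}`. In any commutative monoid the elements `g + α ≤ g` form a group under
`(g + α) ∘ (g + β) = g + (α + β)`, with neutral element `g` and inverse `g + z` when
`g + α + z = g`. Since `v^p` carries a loop in every member of `C_{v^p}`, `g` absorbs `a_w` for
every `[w] < p`, and it absorbs the non-loop part of every free relation below it; hence
`x_w ↦ g + a_w` respects the relations of `G_p''`.

For the inverse, send `a_u` to `(x_u, 0)` if `[u] < p`, to `(0, 1)` if `u = v^p`, and to `⊤`
otherwise, in `WithTop (G_p'' × ℕ)`. This respects the relations of `M(E,C)`: a relation at a
vertex `u` not reachable from `v^p` contains an edge whose range still reaches `u` (a loop, or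
an edge inside the transitive component of `u`), so both sides are `⊤`. An element `g + α ≤ g`
is sent to some `(t, 1)`, which inverts `x_w ↦ g + a_w`; and its `α` is sent to `(t, 0)`, which
forces `α` to be a combination of the `a_w` with `[w] < p`, giving surjectivity.
-/

section TranslatesBelow

variable {M : Type*} [AddCommMonoid M]

def TranslatesBelow (g : M) : Type _ := {x : M // (∃ α, x = g + α) ∧ ∃ z, x + z = g}

namespace TranslatesBelow

variable {g : M}

noncomputable def offset (x : TranslatesBelow g) : M := x.2.1.choose

lemma val_eq_add_offset (x : TranslatesBelow g) : x.1 = g + x.offset := x.2.1.choose_spec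

noncomputable def complement (x : TranslatesBelow g) : M := x.2.2.choose

lemma val_add_complement (x : TranslatesBelow g) : x.1 + x.complement = g := x.2.2.choose_spec

lemma add_offset_add_complement (x : TranslatesBelow g) :
    g + (x.offset + x.complement) = g := by
  rw [← add_assoc, ← x.val_eq_add_offset, x.val_add_complement]

noncomputable instance : Add (TranslatesBelow g) where
  add x y := ⟨x.1 + y.offset, ⟨x.offset + y.offset, by rw [x.val_eq_add_offset, add_assoc]⟩,
    y.complement + x.complement, by
      rw [show x.1 + y.offset + (y.complement + x.complement) =
          x.1 + x.complement + (y.offset + y.complement) by abel,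
        x.val_add_complement, y.add_offset_add_complement]⟩

instance : Zero (TranslatesBelow g) := ⟨⟨g, ⟨0, (add_zero g).symm⟩, 0, add_zero g⟩⟩

noncomputable instance : Neg (TranslatesBelow g) where
  neg x := ⟨g + x.complement, ⟨_, rfl⟩, x.offset, by
    rw [add_assoc, add_comm x.complement, x.add_offset_add_complement]⟩

lemma val_zero : (0 : TranslatesBelow g).1 = g := rfl

lemma val_neg (x : TranslatesBelow g) : (-x).1 = g + x.complement := rfl

lemma val_add {x y : TranslatesBelow g} {α β : M} (hx : x.1 = g + α) (hy : y.1 = g + β) :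
    (x + y).1 = g + (α + β) :=
  calc x.1 + y.offset = α + y.1 := by rw [hx, y.val_eq_add_offset]; abel
    _ = g + (α + β) := by rw [hy]; abel

lemma val_add_add_self (x y : TranslatesBelow g) : (x + y).1 + g = x.1 + y.1 := by
  rw [val_add x.val_eq_add_offset y.val_eq_add_offset, x.val_eq_add_offset,
    y.val_eq_add_offset]
  abel

noncomputable instance : AddCommGroup (TranslatesBelow g) where
  add_assoc x y z := Subtype.ext <| by
    rw [val_add (val_add x.val_eq_add_offset y.val_eq_add_offset) z.val_eq_add_offset,
      val_add x.val_eq_add_offset (val_add y.val_eq_add_offset z.val_eq_add_offset), add_assoc]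
  add_comm x y := Subtype.ext <| by
    rw [val_add x.val_eq_add_offset y.val_eq_add_offset,
      val_add y.val_eq_add_offset x.val_eq_add_offset, add_comm x.offset]
  zero_add x := Subtype.ext <| by
    rw [val_add (val_zero.trans (add_zero g).symm) x.val_eq_add_offset, zero_add,
      x.val_eq_add_offset]
  add_zero x := Subtype.ext <| by
    rw [val_add x.val_eq_add_offset (val_zero.trans (add_zero g).symm), add_zero,
      x.val_eq_add_offset]
  neg_add_cancel x := Subtype.ext <| by
    rw [val_add (val_neg x) x.val_eq_add_offset, add_comm x.complement,
      x.add_offset_add_complement, val_zero]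
  nsmul := nsmulRec
  zsmul := zsmulRec

lemma val_sum {ι : Type*} (s : Finset ι) {F : ι → TranslatesBelow g} {a : ι → M}
    (h : ∀ i ∈ s, (F i).1 = g + a i) : (∑ i ∈ s, F i).1 = g + ∑ i ∈ s, a i := by
  classical
  induction s using Finset.induction with
  | empty => simp [val_zero]
  | insert i s hi ih =>
    rw [Finset.sum_insert hi, Finset.sum_insert hi]
    exact val_add (h i (Finset.mem_insert_self i s))
      (ih fun j hj => h j (Finset.mem_insert_of_mem hj))

end TranslatesBelow

end TranslatesBelow

noncomputable instance (G : SepGraph) (v : G.V) : AddCommGroup (Gp' G v) :=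
  inferInstanceAs (AddCommGroup (TranslatesBelow (G.gen v)))

lemma Relation.ReflTransGen.exists_ne_head {α : Type*} {r : α → α → Prop} {a b : α}
    (h : Relation.ReflTransGen r a b) (hab : a ≠ b) :
    ∃ c, r a c ∧ c ≠ a ∧ Relation.ReflTransGen r c b := by
  induction h using Relation.ReflTransGen.head_induction_on with
  | refl => exact absurd rfl hab
  | @head a c hac hcb ih =>
    by_cases hca : c = a
    · subst hca
      exact ih hab
    · exact ⟨c, hac, hca, hcb⟩

namespace SepGraph

variable {G : SepGraph} {A : G.AdaptableStructure} {v : G.V}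

lemma gen_eq_sum {u : G.V} {X : Finset G.Ed} (hX : X ∈ G.C u) :
    G.gen u = ∑ e ∈ X, G.gen (G.r e) := by
  have h : G.mCon (G.vert u) (G.rX X) := AddConGen.Rel.of _ _ ⟨u, X, hX, rfl, rfl⟩
  have hmk : G.gen u = G.mCon.mk' (G.rX X) := (AddCon.eq G.mCon).mpr h
  rw [hmk, rX, map_sum]
  rfl

lemma exists_gen_eq_add_of_reach {a b : G.V} (h : G.Reach a b) :
    ∃ δ, G.gen a = G.gen b + δ := by
  classical
  induction h with
  | refl => exact ⟨0, (add_zero _).symm⟩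
  | tail _ hedge ih =>
    obtain ⟨δ, hδ⟩ := ih
    obtain ⟨e, rfl, rfl⟩ := hedge
    obtain ⟨X, hX, heX⟩ := G.c_cover e
    refine ⟨∑ f ∈ X.erase e, G.gen (G.r f) + δ, ?_⟩
    rw [hδ, gen_eq_sum hX, ← Finset.add_sum_erase _ _ heX, add_assoc]

lemma VLt.of_reach {u a : G.V} (hu : G.VLt u v) (h : G.Reach u a) : G.VLt a v :=
  ⟨hu.1.trans h, fun hc => hu.2 (h.trans hc)⟩

lemma VLt.of_reach_right {a u : G.V} (ha : G.VLt a u) (h : G.Reach v u) : G.VLt a v :=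
  ⟨h.trans ha.1, fun hc => ha.2 (hc.trans h)⟩

lemma VLt.ne {w : G.V} (h : G.VLt w v) : w ≠ v :=
  fun hc => h.2 (hc ▸ Relation.ReflTransGen.refl)

lemma absorb_of_reach {u : G.V} {β : G.M} (h : G.Reach v u) (hu : G.gen u + β = G.gen u) :
    G.gen v + β = G.gen v := by
  obtain ⟨δ, hδ⟩ := exists_gen_eq_add_of_reach h
  rw [hδ, add_right_comm, hu]

lemma pre_finite_toFinset_eq {w : G.V} (hw : ¬ A.free w)
    {X : Finset G.Ed} (hX : X ∈ G.C w) : (G.pre_finite A hw).toFinset = X := by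
  obtain ⟨X', -, huniq⟩ := A.reg_unique_C w hw
  ext e
  rw [Set.Finite.mem_toFinset, Set.mem_ofPred_eq]
  refine ⟨fun he => ?_, G.c_src w X hX e⟩
  obtain ⟨Y, hY, heY⟩ := G.c_cover e
  rw [he] at hY
  rwa [huniq Y hY, ← huniq X hX] at heY

lemma AdaptableStructure.exists_mem_reach_source (A : G.AdaptableStructure) {u : G.V}
    {X : Finset G.Ed} (hX : X ∈ G.C u) : ∃ e ∈ X, G.Reach (G.r e) u := by
  by_cases hu : A.free u
  · obtain ⟨e, ⟨he, hr⟩, -⟩ := A.free_loop u hu X hX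
    exact ⟨e, he, hr ▸ Relation.ReflTransGen.refl⟩
  · obtain ⟨e, -, -, hs, -, hr, -⟩ := A.reg_two_edges u hu
    refine ⟨e, ?_, hr.1⟩
    rw [← pre_finite_toFinset_eq hu hX, Set.Finite.mem_toFinset]
    exact hs

lemma vlt_of_reach_of_ne (hv : A.free v) {u : G.V} (h : G.Reach v u) (hne : u ≠ v) :
    G.VLt u v :=
  ⟨h, fun h' => hne (A.free_singleton v hv u ⟨h', h⟩)⟩

lemma AdaptableStructure.mem_erase_loop_iff [DecidableEq G.Ed] (A : G.AdaptableStructure)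
    {u : G.V} (hu : A.free u) {X : Finset G.Ed} (hX : X ∈ G.C u) {e₀ e : G.Ed}
    (he₀ : e₀ ∈ X ∧ G.r e₀ = u) (he : e ∈ X) : e ∈ X.erase e₀ ↔ G.r e ≠ u := by
  obtain ⟨_, -, huniq⟩ := A.free_loop u hu X hX
  rw [Finset.mem_erase, and_iff_left he]
  refine ⟨fun hne hr => hne ?_, fun hr he' => hr (he' ▸ he₀.2)⟩
  rw [huniq e ⟨he, hr⟩, huniq e₀ he₀]

lemma gen_add_sum_erase_loop [DecidableEq G.Ed] {u : G.V} {X : Finset G.Ed} (hX : X ∈ G.C u)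
    {e₀ : G.Ed} (he₀ : e₀ ∈ X ∧ G.r e₀ = u) :
    G.gen u + ∑ e ∈ X.erase e₀, G.gen (G.r e) = G.gen u := by
  conv_rhs => rw [gen_eq_sum hX, ← Finset.add_sum_erase _ _ he₀.1, he₀.2]

lemma absorb_gen_of_vlt {w : G.V} (hv : A.free v) (hw : G.VLt w v) :
    ∃ z, G.gen v + G.gen w + z = G.gen v := by
  classical
  obtain ⟨b, ⟨e, rfl, rfl⟩, hne, hbw⟩ := hw.1.exists_ne_head hw.ne.symm
  obtain ⟨X, hX, heX⟩ := G.c_cover e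
  obtain ⟨e₀, he₀, -⟩ := A.free_loop _ hv X hX
  have he : e ∈ X.erase e₀ := (A.mem_erase_loop_iff hv hX he₀ heX).mpr hne
  obtain ⟨δ, hδ⟩ := exists_gen_eq_add_of_reach hbw
  refine ⟨δ + ∑ f ∈ (X.erase e₀).erase e, G.gen (G.r f), ?_⟩
  conv_rhs => rw [← gen_add_sum_erase_loop hX he₀, ← Finset.add_sum_erase _ _ he, hδ]
  abel

lemma absorb_nonloop_sum {u : G.V} (hu : A.free u) (hvu : G.Reach v u) {X Y : Finset G.Ed}
    (hX : X ∈ G.C u) (hYX : Y ⊆ X) (hY : ∀ e ∈ X, (e ∈ Y ↔ G.r e ≠ u)) :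
    G.gen v + ∑ e ∈ Y, G.gen (G.r e) = G.gen v := by
  classical
  obtain ⟨e₀, he₀, -⟩ := A.free_loop u hu X hX
  have hY : Y = X.erase e₀ := by
    ext e
    by_cases he : e ∈ X
    · rw [hY e he, A.mem_erase_loop_iff hu hX he₀ he]
    · exact iff_of_false (fun h => he (hYX h)) (fun h => he (Finset.mem_of_mem_erase h))
  exact absorb_of_reach hvu (hY ▸ gen_add_sum_erase_loop hX he₀)

noncomputable def genAbove (hv : A.free v) (w : {w : G.V // G.VLt w v}) : Gp' G v :=
  ⟨G.gen v + G.gen w.1, ⟨_, rfl⟩, absorb_gen_of_vlt hv w.2⟩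

noncomputable def freeToGp' (hv : A.free v) : ({w : G.V // G.VLt w v} →₀ ℤ) →+ Gp' G v :=
  Finsupp.liftAddHom fun w => zmultiplesHom _ (genAbove hv w)

lemma freeToGp'_single (hv : A.free v) (w : {w : G.V // G.VLt w v}) :
    freeToGp' hv (Finsupp.single w 1) = genAbove hv w := by
  rw [freeToGp', Finsupp.liftAddHom_apply_single]
  exact one_zsmul _

lemma val_freeToGp'_sum_single {ι : Type*} (hv : A.free v) (s : Finset ι)
    (f : ι → {w : G.V // G.VLt w v}) :
    (freeToGp' hv (∑ i ∈ s, Finsupp.single (f i) 1)).1 =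
      G.gen v + ∑ i ∈ s, G.gen (f i).1 := by
  rw [map_sum]
  exact TranslatesBelow.val_sum s fun i _ => by rw [freeToGp'_single]; rfl

lemma freeToGp'_eq_zero_of_mem_rels (hv : A.free v) {f : {w : G.V // G.VLt w v} →₀ ℤ}
    (hf : f ∈ rels14 G A v) : freeToGp' hv f = 0 := by
  rcases hf with ⟨w, hwv, hw, hwf, rfl⟩ | ⟨u, hu, hvu, X, hX, Y, hYX, hY, hwf, rfl⟩
  · obtain ⟨X, hX, -⟩ := A.reg_unique_C w hw
    rw [map_sub, sub_eq_zero, freeToGp'_single]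
    refine Subtype.ext ?_
    rw [val_freeToGp'_sum_single, Finset.sum_attach _ (fun e => G.gen (G.r e)),
      pre_finite_toFinset_eq hw hX, ← gen_eq_sum hX]
    rfl
  · refine Subtype.ext ?_
    rw [val_freeToGp'_sum_single, Finset.sum_attach Y (fun e => G.gen (G.r e)),
      absorb_nonloop_sum hu hvu hX hYX hY]
    rfl

noncomputable def toGp' (hv : A.free v) : Gpp14 G A v →+ Gp' G v :=
  QuotientAddGroup.lift _ (freeToGp' hv) <| (AddSubgroup.closure_le _).2 fun _ hf =>
    AddMonoidHom.mem_ker.2 (freeToGp'_eq_zero_of_mem_rels hv hf)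

lemma toGp'_mk_single (hv : A.free v) (w : {w : G.V // G.VLt w v}) :
    toGp' hv (QuotientAddGroup.mk (Finsupp.single w 1)) = genAbove hv w :=
  (QuotientAddGroup.lift_mk _ _ _).trans (freeToGp'_single hv w)

lemma mk_eq_zero_of_mem_rels {f : {w : G.V // G.VLt w v} →₀ ℤ} (hf : f ∈ rels14 G A v) :
    (QuotientAddGroup.mk f : Gpp14 G A v) = 0 :=
  (QuotientAddGroup.eq_zero_iff _).2 (AddSubgroup.subset_closure hf)

variable (A v) in
open Classical in
noncomputable def weight (u : G.V) : WithTop (Gpp14 G A v × ℕ) :=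
  if h : G.VLt u v then ↑((QuotientAddGroup.mk (Finsupp.single ⟨u, h⟩ 1) : Gpp14 G A v), 0)
  else if u = v then ↑((0 : Gpp14 G A v), 1) else ⊤

lemma weight_of_vlt {u : G.V} (h : G.VLt u v) :
    weight A v u = ↑((QuotientAddGroup.mk (Finsupp.single ⟨u, h⟩ 1) : Gpp14 G A v), 0) :=
  dif_pos h

lemma weight_self : weight A v v = ↑((0 : Gpp14 G A v), 1) := by
  rw [weight, dif_neg fun h => h.ne rfl, if_pos rfl]

lemma weight_of_not_reach {u : G.V} (h : ¬ G.Reach v u) : weight A v u = ⊤ := by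
  rw [weight, dif_neg fun h' => h h'.1, if_neg (by rintro rfl; exact h .refl)]

lemma vlt_of_nsmul_weight_eq_coe {u : G.V} {n : ℕ} (hn : n ≠ 0) {a : Gpp14 G A v × ℕ}
    (h : n • weight A v u = ↑a) (ha : a.2 = 0) : G.VLt u v := by
  by_contra hlt
  by_cases huv : u = v
  · rw [huv, weight_self, ← WithTop.coe_nsmul, WithTop.coe_inj] at h
    have h2 := congrArg Prod.snd h
    simp only [Prod.smul_snd, smul_eq_mul, mul_one] at h2
    exact hn (h2.trans ha)
  · obtain ⟨m, rfl⟩ := Nat.exists_eq_succ_of_ne_zero hn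
    rw [weight, dif_neg hlt, if_neg huv, succ_nsmul, WithTop.add_top] at h
    exact WithTop.top_ne_coe h

lemma sum_weight_of_vlt (s : Finset G.Ed) (hs : ∀ e ∈ s, G.VLt (G.r e) v) :
    ∑ e ∈ s, weight A v (G.r e) =
      ↑((QuotientAddGroup.mk (∑ e ∈ s.attach, Finsupp.single ⟨G.r e.1, hs e.1 e.2⟩ 1) :
        Gpp14 G A v), 0) := by
  rw [← Finset.sum_attach s, Finset.sum_congr rfl fun e _ => weight_of_vlt (hs e.1 e.2),
    ← WithTop.coe_sum, QuotientAddGroup.mk_sum]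
  congr 1
  ext <;> simp [Prod.fst_sum, Prod.snd_sum]

lemma weight_eq_sum (hv : A.free v) {u : G.V} {X : Finset G.Ed} (hX : X ∈ G.C u) :
    weight A v u = ∑ e ∈ X, weight A v (G.r e) := by
  classical
  by_cases hvu : G.Reach v u
  swap
  · obtain ⟨e, heX, heu⟩ := A.exists_mem_reach_source hX
    rw [weight_of_not_reach hvu, eq_comm, WithTop.sum_eq_top]
    exact ⟨e, heX, weight_of_not_reach fun h => hvu (h.trans heu)⟩
  by_cases hu : A.free u
  · obtain ⟨e₀, he₀, -⟩ := A.free_loop u hu X hX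
    have hY : ∀ e ∈ X, (e ∈ X.erase e₀ ↔ G.r e ≠ u) := fun e he =>
      A.mem_erase_loop_iff hu hX he₀ he
    have hlt : ∀ e ∈ X.erase e₀, G.VLt (G.r e) v := fun e he =>
      (((A.free_targets u hu X hX e (Finset.mem_of_mem_erase he)).resolve_left
        ((hY e (Finset.mem_of_mem_erase he)).1 he))).of_reach_right hvu
    have hrel := mk_eq_zero_of_mem_rels (A := A)
      (Or.inr ⟨u, hu, hvu, X, hX, _, Finset.erase_subset _ _, hY, hlt, rfl⟩)
    rw [← Finset.add_sum_erase _ _ he₀.1, he₀.2, sum_weight_of_vlt _ hlt, hrel,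
      Prod.mk_zero_zero, WithTop.coe_zero, add_zero]
  · have hlt : G.VLt u v := vlt_of_reach_of_ne hv hvu fun h => hu (h ▸ hv)
    have hwf : ∀ e : G.Ed, G.s e = u → G.VLt (G.r e) v := fun e he =>
      (A.reg_targets u hu e he).elim (fun h => hlt.of_reach h.2) fun h => h.of_reach_right hvu
    have hrel := mk_eq_zero_of_mem_rels (A := A) (Or.inl ⟨u, hlt, hu, hwf, rfl⟩)
    rw [QuotientAddGroup.mk_sub, sub_eq_zero] at hrel
    rw [← pre_finite_toFinset_eq hu hX,
      sum_weight_of_vlt _ fun e he => hwf e ((G.pre_finite A hu).mem_toFinset.mp he),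
      weight_of_vlt hlt, hrel]

variable (A v) in
noncomputable def freeWeightHom : G.FreeM →+ WithTop (Gpp14 G A v × ℕ) :=
  Finsupp.liftAddHom fun u => multiplesHom _ (weight A v u)

lemma freeWeightHom_single (u : G.V) (n : ℕ) :
    freeWeightHom A v (Finsupp.single u n) = n • weight A v u :=
  Finsupp.liftAddHom_apply_single _ _ _

noncomputable def weightHom (hv : A.free v) : G.M →+ WithTop (Gpp14 G A v × ℕ) :=
  G.mCon.lift (freeWeightHom A v) <|
    AddCon.addConGen_le.2 fun _ _ ⟨u, X, hX, hu, hX'⟩ => (AddCon.ker_rel _).2 <| by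
      simp only [hu, hX', vert, rX, map_sum, freeWeightHom_single, one_nsmul]
      exact weight_eq_sum hv hX

lemma weightHom_gen (hv : A.free v) (u : G.V) : weightHom hv (G.gen u) = weight A v u :=
  (AddCon.lift_mk' _ _).trans <| (freeWeightHom_single u 1).trans (one_nsmul _)

lemma exists_weightHom_eq_of_absorb (hv : A.free v) {α : G.M}
    (h : ∃ z, G.gen v + α + z = G.gen v) :
    ∃ t, weightHom hv α = ↑((t, 0) : Gpp14 G A v × ℕ) := by
  obtain ⟨z, hz⟩ := h
  have h1 := congrArg (weightHom hv) hz
  rw [map_add, map_add, weightHom_gen, weight_self] at h1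
  obtain ⟨p, b, hp, -, hpb⟩ := WithTop.add_eq_coe.1 h1
  obtain ⟨o, a, ho, ha, hoa⟩ := WithTop.add_eq_coe.1 hp.symm
  have hsnd : a.2 = 0 := by
    have h2 := congrArg Prod.snd hpb
    have h3 := congrArg Prod.snd hoa
    have h4 := congrArg Prod.snd (WithTop.coe_inj.1 ho)
    simp only [Prod.snd_add] at h2 h3 h4
    omega
  exact ⟨a.1, by rw [← ha, ← hsnd]⟩

lemma exists_weightHom_val_eq (hv : A.free v) (x : Gp' G v) :
    ∃ t, weightHom hv x.1 = ↑((t, 1) : Gpp14 G A v × ℕ) := by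
  obtain ⟨⟨α, hα⟩, z, hz⟩ := x.2
  obtain ⟨t, ht⟩ := exists_weightHom_eq_of_absorb hv ⟨z, hα ▸ hz⟩
  refine ⟨t, ?_⟩
  rw [hα, map_add, weightHom_gen, weight_self, ht, ← WithTop.coe_add, Prod.mk_add_mk, zero_add,
    add_zero]

noncomputable def fromGp' (hv : A.free v) : Gp' G v →+ Gpp14 G A v :=
  AddMonoidHom.mk' (fun x => (exists_weightHom_val_eq hv x).choose) fun x y => by
    have key : weightHom hv ((x + y).1 + G.gen v) = weightHom hv (x.1 + y.1) :=
      congrArg _ (TranslatesBelow.val_add_add_self (g := G.gen v) x y)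
    rw [map_add, map_add, weightHom_gen, weight_self, (exists_weightHom_val_eq hv _).choose_spec,
      (exists_weightHom_val_eq hv x).choose_spec, (exists_weightHom_val_eq hv y).choose_spec,
      ← WithTop.coe_add, ← WithTop.coe_add, WithTop.coe_inj] at key
    simpa using congrArg Prod.fst key

lemma fromGp'_eq (hv : A.free v) {x : Gp' G v} {t : Gpp14 G A v}
    (h : weightHom hv x.1 = ↑((t, 1) : Gpp14 G A v × ℕ)) : fromGp' hv x = t :=
  congrArg Prod.fst <| WithTop.coe_inj.1 <|
    (exists_weightHom_val_eq hv x).choose_spec.symm.trans h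

lemma fromGp'_toGp' (hv : A.free v) (a : Gpp14 G A v) : fromGp' hv (toGp' hv a) = a := by
  suffices (fromGp' hv).comp (toGp' hv) = AddMonoidHom.id _ from DFunLike.congr_fun this a
  refine QuotientAddGroup.addMonoidHom_ext _ <| Finsupp.addHom_ext' fun w =>
    AddMonoidHom.ext_int ?_
  show fromGp' hv (toGp' hv (QuotientAddGroup.mk (Finsupp.single w 1))) = _
  apply fromGp'_eq hv
  rw [toGp'_mk_single, genAbove, map_add, weightHom_gen, weightHom_gen, weight_self,
    weight_of_vlt w.2, ← WithTop.coe_add, Prod.mk_add_mk, zero_add, add_zero]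
  rfl

lemma mk'_mem_closure_of_freeWeightHom_eq (c : G.FreeM) {t : Gpp14 G A v}
    (h : freeWeightHom A v c = ↑((t, 0) : Gpp14 G A v × ℕ)) :
    G.mCon.mk' c ∈ AddSubmonoid.closure (G.gen '' {w | G.VLt w v}) := by
  induction c using Finsupp.induction generalizing t with
  | zero => exact zero_mem _
  | single_add u n c _ hn ih =>
    have hsingle : G.mCon.mk' (Finsupp.single u n) = n • G.gen u := by
      rw [← Finsupp.smul_single_one, map_nsmul]
      rfl
    rw [map_add, freeWeightHom_single] at h
    obtain ⟨a, b, ha, hb, hab⟩ := WithTop.add_eq_coe.1 h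
    have hsnd := congrArg Prod.snd hab
    simp only [Prod.snd_add] at hsnd
    have hu : G.VLt u v := vlt_of_nsmul_weight_eq_coe hn ha.symm (by omega)
    have hb2 : b.2 = 0 := by omega
    rw [map_add, hsingle]
    exact add_mem (nsmul_mem (AddSubmonoid.subset_closure (Set.mem_image_of_mem G.gen hu)) n)
      (ih (t := b.1) (by rw [← hb, ← hb2]))

lemma mem_closure_of_weightHom_eq (hv : A.free v) {α : G.M} {t : Gpp14 G A v}
    (h : weightHom hv α = ↑((t, 0) : Gpp14 G A v × ℕ)) :
    α ∈ AddSubmonoid.closure (G.gen '' {w | G.VLt w v}) := by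
  obtain ⟨c, rfl⟩ := AddCon.mk'_surjective (c := G.mCon) α
  exact mk'_mem_closure_of_freeWeightHom_eq c ((AddCon.lift_mk' _ _).symm.trans h)

lemma exists_toGp'_val_eq (hv : A.free v) {α : G.M}
    (hα : α ∈ AddSubmonoid.closure (G.gen '' {w | G.VLt w v})) :
    ∃ a, (toGp' hv a).1 = G.gen v + α := by
  induction hα using AddSubmonoid.closure_induction with
  | mem _ h =>
    obtain ⟨w, hw, rfl⟩ := h
    exact ⟨_, congrArg Subtype.val (toGp'_mk_single hv ⟨w, hw⟩)⟩
  | zero => exact ⟨0, by rw [map_zero]; exact (add_zero _).symm⟩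
  | add α β _ _ hα hβ =>
    obtain ⟨a, ha⟩ := hα
    obtain ⟨b, hb⟩ := hβ
    exact ⟨a + b, by rw [map_add]; exact TranslatesBelow.val_add ha hb⟩

lemma toGp'_surjective (hv : A.free v) : Function.Surjective (toGp' hv) := by
  intro x
  obtain ⟨⟨α, hα⟩, z, hz⟩ := x.2
  obtain ⟨t, ht⟩ := exists_weightHom_eq_of_absorb hv ⟨z, hα ▸ hz⟩
  obtain ⟨a, ha⟩ := exists_toGp'_val_eq hv (mem_closure_of_weightHom_eq hv ht)
  exact ⟨a, Subtype.ext (ha.trans hα.symm)⟩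

end SepGraph

theorem stmt14_general (G : SepGraph) (A : G.AdaptableStructure) (v : G.V) (hv : A.free v) :
    ∃ (op : Gp' G v → Gp' G v → Gp' G v) (e : Gp' G v) (inv : Gp' G v → Gp' G v),
      (∀ (x y : Gp' G v) (α β : G.M), x.1 = G.gen v + α → y.1 = G.gen v + β →
        (op x y).1 = G.gen v + (α + β)) ∧
      (∀ x y z : Gp' G v, op (op x y) z = op x (op y z)) ∧
      (∀ x y : Gp' G v, op x y = op y x) ∧
      (∀ x : Gp' G v, op x e = x) ∧
      (∀ x : Gp' G v, op x (inv x) = e) ∧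
      ∃ φ : Gpp14 G A v → Gp' G v, Function.Bijective φ ∧
        (∀ a b : Gpp14 G A v, φ (a + b) = op (φ a) (φ b)) ∧
        ∀ (w : G.V) (hw : G.VLt w v),
          (φ (QuotientAddGroup.mk (Finsupp.single ⟨w, hw⟩ 1))).1 = G.gen v + G.gen w :=
  ⟨(· + ·), 0, Neg.neg, fun _ _ _ _ => TranslatesBelow.val_add, add_assoc, add_comm, add_zero,
    add_neg_cancel, SepGraph.toGp' hv,
    ⟨Function.LeftInverse.injective (SepGraph.fromGp'_toGp' hv), SepGraph.toGp'_surjective hv⟩,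
    map_add _, fun w hw => congrArg Subtype.val (SepGraph.toGp'_mk_single hv ⟨w, hw⟩)⟩

/-- For an adaptable separated graph `(E,C)` and a non-minimal free
prime `p = [v^p]`, the set `G_p'` is an abelian group under the operation
`(a_{v^p}+α) ∘ (a_{v^p}+β) = a_{v^p} + (α+β)`, and `x_w ↦ a_{v^p} + a_w` defines a
group isomorphism `G_p'' ≅ G_p'`. -/
theorem stmt14 (G : SepGraph) (A : G.AdaptableStructure) (v : G.V) (hv : A.free v)
    (hnm : ∃ w : G.V, G.VLt w v) :
    ∃ (op : Gp' G v → Gp' G v → Gp' G v) (e : Gp' G v) (inv : Gp' G v → Gp' G v),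
      (∀ (x y : Gp' G v) (α β : G.M), x.1 = G.gen v + α → y.1 = G.gen v + β →
        (op x y).1 = G.gen v + (α + β)) ∧
      (∀ x y z : Gp' G v, op (op x y) z = op x (op y z)) ∧
      (∀ x y : Gp' G v, op x y = op y x) ∧
      (∀ x : Gp' G v, op x e = x) ∧
      (∀ x : Gp' G v, op x (inv x) = e) ∧
      ∃ φ : Gpp14 G A v → Gp' G v, Function.Bijective φ ∧
        (∀ a b : Gpp14 G A v, φ (a + b) = op (φ a) (φ b)) ∧
        ∀ (w : G.V) (hw : G.VLt w v),
          (φ (QuotientAddGroup.mk (Finsupp.single ⟨w, hw⟩ 1))).1 = G.gen v + G.gen w :=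
  stmt14_general G A v hv
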